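/- Let C be a finite nonempty set of class labels, let {M_c}_{c∈C} be a POVM on ℂ^N (each M_c positive semidefinite with Σ_{c∈C} M_c = I), let {E_k}_{k∈K} be a finite Kraus family on ℂ^N (Σ_{k∈K} E_kᴴ E_k = I) with associated channel E(σ) = Σ_k E_k σ E_kᴴ, and let ρ be a density matrix on ℂ^N. Set p_c := Tr[M_c E(ρ)] and let c* ∈ C satisfy p_{c*} ≥ p_c for all c ∈ C. Then for every density matrix σ on ℂ^N with 1 − F(ρ, σ) ≤ min_{c ≠ c*} (1/2)(√(p_{c*}) − √(p_c))², it holds that Tr[M_{c*} E(σ)] ≥ Tr[M_c E(σ)] for every c ≠ c* (assuming |C| ≥ 2; if |C| = 1 the conclusion is vacuous). -/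

import Mathlib

open Matrix
open scoped ComplexOrder

/-- Positive-semidefinite square root of a matrix (zero if not PSD). -/
noncomputable def psdSqrt {N : ℕ} (A : Matrix (Fin N) (Fin N) ℂ) :
    Matrix (Fin N) (Fin N) ℂ :=
  open scoped Classical in
  if h : A.PosSemidef then
    h.1.eigenvectorUnitary.1 * diagonal ((↑) ∘ (√·) ∘ h.1.eigenvalues) *
      (star h.1.eigenvectorUnitary : Matrix (Fin N) (Fin N) ℂ)
  else 0

/-- Root fidelity `Tr √(√ρ σ √ρ)`. -/
noncomputable def rootFidelity {N : ℕ} (ρ σ : Matrix (Fin N) (Fin N) ℂ) : ℝ :=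
  (psdSqrt (psdSqrt ρ * σ * psdSqrt ρ)).trace.re

/-- Fidelity `F(ρ,σ) = (Tr √(√ρ σ √ρ))²`. -/
noncomputable def fidelity {N : ℕ} (ρ σ : Matrix (Fin N) (Fin N) ℂ) : ℝ :=
  (rootFidelity ρ σ) ^ 2

/-- A density matrix: positive semidefinite with trace one. -/
def IsDensityMatrix {N : ℕ} (ρ : Matrix (Fin N) (Fin N) ℂ) : Prop :=
  ρ.PosSemidef ∧ ρ.trace = 1

/-- A POVM: a family of PSD matrices summing to the identity. -/
def IsPOVM {N : ℕ} {C : Type*} [Fintype C] (M : C → Matrix (Fin N) (Fin N) ℂ) : Prop :=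
  (∀ c, (M c).PosSemidef) ∧ ∑ c, M c = 1

/-- A Kraus family: `∑ Eₖᴴ Eₖ = I`. -/
def IsKrausFamily {N : ℕ} {K : Type*} [Fintype K] (E : K → Matrix (Fin N) (Fin N) ℂ) : Prop :=
  ∑ k, (E k)ᴴ * E k = 1

/-- The quantum channel associated with a Kraus family. -/
noncomputable def channel {N : ℕ} {K : Type*} [Fintype K]
    (E : K → Matrix (Fin N) (Fin N) ℂ) (σ : Matrix (Fin N) (Fin N) ℂ) :
    Matrix (Fin N) (Fin N) ℂ :=
  ∑ k, E k * σ * (E k)ᴴ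

/-- Minimum of `f` over all labels distinct from `cstar` (needs `|C| ≥ 2`). -/
noncomputable def minErase {C : Type*} [Fintype C] [DecidableEq C] {α : Type*} [LinearOrder α]
    (cstar : C) (h : 1 < Fintype.card C) (f : C → α) : α :=
  (Finset.univ.erase cstar).inf'
    ((Finset.erase_nonempty (Finset.mem_univ cstar)).mpr
      (Finset.one_lt_card_iff_nontrivial.mp (by simpa [Finset.card_univ] using h))) f

/-!
Measuring the POVM `N c = ∑ₖ Eₖᴴ (M c) Eₖ` on `ρ` and `σ` gives the outcome distributions `p`, `q`
of `M` on `E(ρ)`, `E(σ)`, and measuring can only increase the root fidelity: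
`√F(ρ, σ) ≤ ∑ c, √(p c) √(q c)`. Indeed `√F = Tr √(XᴴX)` for `X = √σ √ρ` equals `∑ⱼ ⟪uⱼ, X vⱼ⟫`
for two orthonormal bases `u`, `v`; splitting `X = ∑ c, (√(N c) √σ)ᴴ (√(N c) √ρ)` and applying
Cauchy–Schwarz twice gives the bound.

If the prediction flipped, `q c* < q c`, replace the coordinates `c*` and `c` of the unit vectors
`√p` and `√q` by their means. This does not decrease their inner product, removes exactly
`½ (√(p c*) − √(p c))²` from `‖√p‖²` and a positive amount from `‖√q‖²`, so Cauchy–Schwarz gives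
`(∑ c, √(p c) √(q c))² < 1 − ½ (√(p c*) − √(p c))²`, contradicting the hypothesis on `F(ρ, σ)`.
-/

open scoped MatrixOrder InnerProductSpace

section TraceNorm

variable {𝕜 m n ι : Type*} [RCLike 𝕜] [Fintype m] [Fintype n] [DecidableEq n] [Fintype ι]

theorem Matrix.trace_eq_sum_inner (A : Matrix n n 𝕜)
    (b : OrthonormalBasis ι 𝕜 (EuclideanSpace 𝕜 n)) :
    A.trace = ∑ i, ⟪b i, toEuclideanLin A (b i)⟫_𝕜 := by
  rw [← LinearMap.trace_eq_sum_inner]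
  exact (A.trace_toLin_eq (PiLp.basisFun 2 𝕜 n)).symm

theorem Matrix.inner_toEuclideanLin_toEuclideanLin [DecidableEq m] (A : Matrix m n 𝕜)
    (x y : EuclideanSpace 𝕜 n) :
    ⟪toEuclideanLin A x, toEuclideanLin A y⟫_𝕜 = ⟪x, toEuclideanLin (Aᴴ * A) y⟫_𝕜 := by
  rw [toLpLin_mul_same, LinearMap.comp_apply, toEuclideanLin_conjTranspose_eq_adjoint,
    LinearMap.adjoint_inner_right]

theorem Matrix.sum_norm_sq_toEuclideanLin [DecidableEq m] (A : Matrix m n 𝕜)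
    (b : OrthonormalBasis ι 𝕜 (EuclideanSpace 𝕜 n)) :
    ∑ i, ‖toEuclideanLin A (b i)‖ ^ 2 = RCLike.re (Aᴴ * A).trace := by
  rw [trace_eq_sum_inner _ b, map_sum]
  refine Finset.sum_congr rfl fun i _ => ?_
  rw [← inner_toEuclideanLin_toEuclideanLin, inner_self_eq_norm_sq]

theorem Matrix.conjTranspose_sqrt (A : Matrix n n 𝕜) : (CFC.sqrt A)ᴴ = CFC.sqrt A :=
  (CFC.sqrt_nonneg A).isSelfAdjoint.star_eq

theorem Matrix.PosSemidef.trace_sqrt {A : Matrix n n 𝕜} (hA : A.PosSemidef) :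
    (CFC.sqrt A).trace = ∑ j, (√(hA.isHermitian.eigenvalues j) : 𝕜) := by
  rw [CFC.sqrt_eq_cfc, cfc_nnreal_eq_real _ A, hA.1.cfc_eq, IsHermitian.cfc,
    Unitary.conjStarAlgAut_apply, trace_mul_cycle, Unitary.coe_star_mul_self, one_mul,
    trace_diagonal]
  refine Finset.sum_congr rfl fun j _ => ?_
  simp [max_eq_left (hA.eigenvalues_nonneg j)]

theorem Matrix.PosSemidef.trace_mul_nonneg {A B : Matrix n n 𝕜} (hA : A.PosSemidef)
    (hB : B.PosSemidef) : 0 ≤ (A * B).trace := by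
  rw [← CFC.sqrt_mul_sqrt_self A hA.nonneg, mul_assoc, trace_mul_comm]
  simpa only [conjTranspose_sqrt, mul_assoc] using
    (hB.mul_mul_conjTranspose_same (CFC.sqrt A)).trace_nonneg

theorem Matrix.exists_orthonormalBasis_trace_sqrt_eq_sum_inner (X : Matrix n n 𝕜) :
    ∃ u v : OrthonormalBasis n 𝕜 (EuclideanSpace 𝕜 n),
      (CFC.sqrt (Xᴴ * X)).trace = ∑ j, ⟪u j, toEuclideanLin X (v j)⟫_𝕜 := by
  have hS := posSemidef_conjTranspose_mul_self X
  set μ := hS.isHermitian.eigenvalues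
  set v := hS.isHermitian.eigenvectorBasis
  have hμ : ∀ j, (μ j : 𝕜) = (√(μ j) : 𝕜) * (√(μ j) : 𝕜) := fun j => by
    rw [← RCLike.ofReal_mul, Real.mul_self_sqrt (hS.eigenvalues_nonneg j)]
  have hXv : ∀ j k, ⟪toEuclideanLin X (v j), toEuclideanLin X (v k)⟫_𝕜 =
      if j = k then (μ j : 𝕜) else 0 := by
    intro j k
    have hvk : toEuclideanLin (Xᴴ * X) (v k) = (μ k : 𝕜) • v k := by
      rw [toLpLin_apply, hS.isHermitian.mulVec_eigenvectorBasis k,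
        RCLike.real_smul_eq_coe_smul (K := 𝕜)]
      rfl
    rw [inner_toEuclideanLin_toEuclideanLin, hvk, inner_smul_right,
      orthonormal_iff_ite.mp v.orthonormal j k]
    split_ifs with h <;> simp [h]
  -- `u` extends the normalised nonzero vectors among the pairwise orthogonal `X vⱼ`
  set w : n → EuclideanSpace 𝕜 n := fun j => ((√(μ j) : 𝕜)⁻¹) • toEuclideanLin X (v j)
  have hw : Orthonormal 𝕜 ({j | μ j ≠ 0}.domRestrict w) := by
    rw [orthonormal_iff_ite]
    rintro ⟨j, hj⟩ ⟨k, hk⟩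
    simp only [Set.domRestrict_apply, w, inner_smul_left, inner_smul_right, hXv, map_inv₀,
      RCLike.conj_ofReal, Subtype.mk.injEq]
    split_ifs with h
    · subst h
      have : (√(μ j) : 𝕜) ≠ 0 := by
        simpa using (Real.sqrt_pos.mpr ((hS.eigenvalues_nonneg j).lt_of_ne' hj)).ne'
      rw [hμ]
      field_simp
    · simp
  obtain ⟨u, hu⟩ := hw.exists_orthonormalBasis_extension_of_card_eq finrank_euclideanSpace
  refine ⟨u, v, ?_⟩
  rw [hS.trace_sqrt]
  refine Finset.sum_congr rfl fun j _ => ?_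
  change (√(μ j) : 𝕜) = _
  by_cases hj : μ j = 0
  · have hXvj : toEuclideanLin X (v j) = 0 := by
      rw [← inner_self_eq_zero (𝕜 := 𝕜), hXv, if_pos rfl, hj, RCLike.ofReal_zero]
    rw [hXvj, inner_zero_right, hj, Real.sqrt_zero, RCLike.ofReal_zero]
  · have : (√(μ j) : 𝕜) ≠ 0 := by
      simpa using (Real.sqrt_pos.mpr ((hS.eigenvalues_nonneg j).lt_of_ne' hj)).ne'
    rw [hu j hj]
    simp only [w, inner_smul_left, hXv, if_pos, map_inv₀, RCLike.conj_ofReal, hμ]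
    exact (inv_mul_cancel_left₀ this _).symm
theorem Matrix.re_trace_sqrt_le_of_eq_sum {X : Matrix n n 𝕜} {Y Z : ι → Matrix n n 𝕜}
    (hX : X = ∑ i, (Y i)ᴴ * Z i) :
    RCLike.re (CFC.sqrt (Xᴴ * X)).trace ≤
      ∑ i, √(RCLike.re ((Y i)ᴴ * Y i).trace) * √(RCLike.re ((Z i)ᴴ * Z i).trace) := by
  obtain ⟨u, v, huv⟩ := X.exists_orthonormalBasis_trace_sqrt_eq_sum_inner
  have hsplit : ∀ j, ⟪u j, toEuclideanLin X (v j)⟫_𝕜 =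
      ∑ i, ⟪toEuclideanLin (Y i) (u j), toEuclideanLin (Z i) (v j)⟫_𝕜 := by
    intro j
    rw [hX, map_sum, LinearMap.sum_apply, inner_sum]
    refine Finset.sum_congr rfl fun i _ => ?_
    rw [toLpLin_mul_same, LinearMap.comp_apply, toEuclideanLin_conjTranspose_eq_adjoint,
      LinearMap.adjoint_inner_right]
  rw [huv, map_sum]
  calc ∑ j, RCLike.re ⟪u j, toEuclideanLin X (v j)⟫_𝕜
      = ∑ i, ∑ j, RCLike.re ⟪toEuclideanLin (Y i) (u j), toEuclideanLin (Z i) (v j)⟫_𝕜 := by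
        simp_rw [hsplit, map_sum]
        exact Finset.sum_comm
    _ ≤ ∑ i, ∑ j, ‖toEuclideanLin (Y i) (u j)‖ * ‖toEuclideanLin (Z i) (v j)‖ :=
        Finset.sum_le_sum fun i _ => Finset.sum_le_sum fun j _ => re_inner_le_norm _ _
    _ ≤ ∑ i, √(∑ j, ‖toEuclideanLin (Y i) (u j)‖ ^ 2) *
          √(∑ j, ‖toEuclideanLin (Z i) (v j)‖ ^ 2) :=
        Finset.sum_le_sum fun i _ => Real.sum_mul_le_sqrt_mul_sqrt _ _ _
    _ = _ := by simp_rw [sum_norm_sq_toEuclideanLin]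

theorem Matrix.re_trace_sqrt_le_sum_sqrt_mul_sqrt {ρ σ : Matrix n n 𝕜} (hρ : ρ.PosSemidef)
    (hσ : σ.PosSemidef) {W : ι → Matrix n n 𝕜} (hW : ∀ i, (W i).PosSemidef)
    (hW1 : ∑ i, W i = 1) :
    RCLike.re (CFC.sqrt (CFC.sqrt ρ * σ * CFC.sqrt ρ)).trace ≤
      ∑ i, √(RCLike.re (W i * ρ).trace) * √(RCLike.re (W i * σ).trace) := by
  have hgram : ∀ {A : Matrix n n 𝕜}, A.PosSemidef → ∀ i,
      ((CFC.sqrt (W i) * CFC.sqrt A)ᴴ * (CFC.sqrt (W i) * CFC.sqrt A)).trace =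
        (W i * A).trace := by
    intro A hA i
    rw [conjTranspose_mul, conjTranspose_sqrt, conjTranspose_sqrt, mul_assoc,
      ← mul_assoc (CFC.sqrt (W i)), CFC.sqrt_mul_sqrt_self _ (hW i).nonneg, ← mul_assoc,
      trace_mul_cycle, CFC.sqrt_mul_sqrt_self _ hA.nonneg, trace_mul_comm]
  have hX : CFC.sqrt σ * CFC.sqrt ρ =
      ∑ i, (CFC.sqrt (W i) * CFC.sqrt σ)ᴴ * (CFC.sqrt (W i) * CFC.sqrt ρ) := by
    simp_rw [conjTranspose_mul, conjTranspose_sqrt, mul_assoc, ← mul_assoc (CFC.sqrt (W _)),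
      CFC.sqrt_mul_sqrt_self _ (hW _).nonneg, ← Finset.mul_sum, ← Finset.sum_mul, hW1, one_mul]
  have hXX : (CFC.sqrt σ * CFC.sqrt ρ)ᴴ * (CFC.sqrt σ * CFC.sqrt ρ) =
      CFC.sqrt ρ * σ * CFC.sqrt ρ := by
    rw [conjTranspose_mul, conjTranspose_sqrt, conjTranspose_sqrt, mul_assoc,
      ← mul_assoc (CFC.sqrt σ), CFC.sqrt_mul_sqrt_self _ hσ.nonneg, mul_assoc]
  rw [← hXX]
  refine (re_trace_sqrt_le_of_eq_sum hX).trans_eq ?_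
  simp_rw [hgram hσ, hgram hρ, mul_comm]

end TraceNorm

theorem sq_mul_add_mul_add_mul_lt {s t s' t' x y : ℝ} (hs : 0 ≤ s) (ht : 0 ≤ t) (hs' : 0 ≤ s')
    (ht' : 0 ≤ t') (hx : 0 ≤ x) (hy : 0 ≤ y) (hsum : s ^ 2 + t ^ 2 + x ^ 2 = 1)
    (hsum' : s' ^ 2 + t' ^ 2 + y ^ 2 = 1) (hts : t ≤ s) (hst' : s' < t') :
    (s * s' + t * t' + x * y) ^ 2 < 1 - 1 / 2 * (s - t) ^ 2 := by
  have hU : 1 - 1 / 2 * (s - t) ^ 2 = (s + t) ^ 2 / 2 + x ^ 2 := by linear_combination -hsum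
  have hV : 1 - 1 / 2 * (s' - t') ^ 2 = (s' + t') ^ 2 / 2 + y ^ 2 := by linear_combination -hsum'
  have hle : s * s' + t * t' + x * y ≤ (s + t) * (s' + t') / 2 + x * y := by
    nlinarith [mul_nonneg (sub_nonneg.2 hts) (sub_nonneg.2 hst'.le)]
  have hcs : ((s + t) * (s' + t') / 2 + x * y) ^ 2 ≤
      (1 - 1 / 2 * (s - t) ^ 2) * (1 - 1 / 2 * (s' - t') ^ 2) := by
    rw [hU, hV]
    nlinarith [sq_nonneg ((s + t) * y - x * (s' + t'))]
  have hU0 : 0 < 1 - 1 / 2 * (s - t) ^ 2 := by nlinarith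
  have hV1 : 1 - 1 / 2 * (s' - t') ^ 2 < 1 := by nlinarith
  have h0 : 0 ≤ s * s' + t * t' + x * y := by positivity
  calc (s * s' + t * t' + x * y) ^ 2 ≤ ((s + t) * (s' + t') / 2 + x * y) ^ 2 :=
        pow_le_pow_left₀ h0 hle 2
    _ ≤ (1 - 1 / 2 * (s - t) ^ 2) * (1 - 1 / 2 * (s' - t') ^ 2) := hcs
    _ < 1 - 1 / 2 * (s - t) ^ 2 := mul_lt_of_lt_one_right hU0 hV1

theorem sq_sum_sqrt_mul_sqrt_lt {C : Type*} [Fintype C] {p q : C → ℝ} (hp : ∀ i, 0 ≤ p i)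
    (hq : ∀ i, 0 ≤ q i) (hp1 : ∑ i, p i = 1) (hq1 : ∑ i, q i = 1) {a c : C} (hca : c ≠ a)
    (hpc : p c ≤ p a) (hqc : q a < q c) :
    (∑ i, √(p i) * √(q i)) ^ 2 < 1 - 1 / 2 * (√(p a) - √(p c)) ^ 2 := by
  classical
  set rest := (Finset.univ.erase a).erase c
  have hsplit : ∀ f : C → ℝ, ∑ i, f i = f a + f c + ∑ i ∈ rest, f i := fun f => by
    rw [← Finset.add_sum_erase _ _ (Finset.mem_univ a),
      ← Finset.add_sum_erase _ _ (Finset.mem_erase.2 ⟨hca, Finset.mem_univ c⟩), add_assoc]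
  have hsq : ∀ {f : C → ℝ}, (∀ i, 0 ≤ f i) → ∑ i, f i = 1 →
      √(f a) ^ 2 + √(f c) ^ 2 + √(∑ i ∈ rest, f i) ^ 2 = 1 := fun hf hf1 => by
    rw [Real.sq_sqrt (hf a), Real.sq_sqrt (hf c),
      Real.sq_sqrt (Finset.sum_nonneg fun i _ => hf i), ← hsplit, hf1]
  have hB : ∑ i, √(p i) * √(q i) ≤ √(p a) * √(q a) + √(p c) * √(q c) +
      √(∑ i ∈ rest, p i) * √(∑ i ∈ rest, q i) := by
    rw [hsplit]
    gcongr
    exact Real.sum_sqrt_mul_sqrt_le rest hp hq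
  calc (∑ i, √(p i) * √(q i)) ^ 2
      ≤ (√(p a) * √(q a) + √(p c) * √(q c) + √(∑ i ∈ rest, p i) * √(∑ i ∈ rest, q i)) ^ 2 :=
        pow_le_pow_left₀ (by positivity) hB 2
    _ < 1 - 1 / 2 * (√(p a) - √(p c)) ^ 2 :=
        sq_mul_add_mul_add_mul_lt (by positivity) (by positivity) (by positivity) (by positivity)
          (by positivity) (by positivity) (hsq hp hp1) (hsq hq hq1) (Real.sqrt_le_sqrt hpc)
          (Real.sqrt_lt_sqrt (hq a) hqc)

section Channel

variable {N : ℕ} {C K : Type*} [Fintype C] [Fintype K]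

theorem psdSqrt_eq_sqrt {A : Matrix (Fin N) (Fin N) ℂ} (hA : A.PosSemidef) :
    psdSqrt A = CFC.sqrt A := by
  rw [CFC.sqrt_eq_cfc, cfc_nnreal_eq_real _ A, hA.1.cfc_eq, psdSqrt, dif_pos hA]
  simp only [IsHermitian.cfc, Unitary.conjStarAlgAut_apply]
  congr
  funext x
  rcases le_total 0 x with hx | hx <;> simp [hx, Real.sqrt_eq_zero_of_nonpos]

theorem rootFidelity_eq_re_trace_sqrt {ρ σ : Matrix (Fin N) (Fin N) ℂ} (hρ : ρ.PosSemidef)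
    (hσ : σ.PosSemidef) :
    rootFidelity ρ σ = (CFC.sqrt (CFC.sqrt ρ * σ * CFC.sqrt ρ)).trace.re := by
  have hconj : (CFC.sqrt ρ * σ * CFC.sqrt ρ).PosSemidef := by
    simpa only [conjTranspose_sqrt] using hσ.mul_mul_conjTranspose_same (CFC.sqrt ρ)
  rw [rootFidelity, psdSqrt_eq_sqrt hρ, psdSqrt_eq_sqrt hconj]

theorem rootFidelity_nonneg {ρ σ : Matrix (Fin N) (Fin N) ℂ} (hρ : ρ.PosSemidef)
    (hσ : σ.PosSemidef) : 0 ≤ rootFidelity ρ σ := by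
  rw [rootFidelity_eq_re_trace_sqrt hρ hσ]
  exact (Complex.nonneg_iff.mp (CFC.sqrt_nonneg _).posSemidef.trace_nonneg).1

theorem rootFidelity_le_sum_sqrt_mul_sqrt {ρ σ : Matrix (Fin N) (Fin N) ℂ} (hρ : ρ.PosSemidef)
    (hσ : σ.PosSemidef) {W : C → Matrix (Fin N) (Fin N) ℂ} (hW : IsPOVM W) :
    rootFidelity ρ σ ≤ ∑ i, √((W i * ρ).trace.re) * √((W i * σ).trace.re) := by
  rw [rootFidelity_eq_re_trace_sqrt hρ hσ]
  exact re_trace_sqrt_le_sum_sqrt_mul_sqrt hρ hσ hW.1 hW.2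

theorem Matrix.PosSemidef.trace_mul_eq_ofReal_re {n : Type*} [Fintype n] [DecidableEq n]
    {A B : Matrix n n ℂ} (hA : A.PosSemidef) (hB : B.PosSemidef) :
    (A * B).trace = ((A * B).trace.re : ℂ) :=
  Complex.eq_re_of_ofReal_le (r := 0) (by exact_mod_cast hA.trace_mul_nonneg hB)

theorem IsPOVM.re_trace_mul_nonneg {W : C → Matrix (Fin N) (Fin N) ℂ} (hW : IsPOVM W)
    {ρ : Matrix (Fin N) (Fin N) ℂ} (hρ : ρ.PosSemidef) (i : C) : 0 ≤ (W i * ρ).trace.re :=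
  (Complex.nonneg_iff.mp ((hW.1 i).trace_mul_nonneg hρ)).1

theorem IsPOVM.sum_re_trace_mul {W : C → Matrix (Fin N) (Fin N) ℂ} (hW : IsPOVM W)
    {ρ : Matrix (Fin N) (Fin N) ℂ} (hρ : IsDensityMatrix ρ) : ∑ i, (W i * ρ).trace.re = 1 := by
  rw [← Complex.re_sum, ← trace_sum, ← Finset.sum_mul, hW.2, one_mul, hρ.2, Complex.one_re]

theorem minErase_le {α : Type*} [LinearOrder α] [DecidableEq C] {cstar : C}
    (h : 1 < Fintype.card C) (f : C → α) {c : C} (hc : c ≠ cstar) : minErase cstar h f ≤ f c :=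
  Finset.inf'_le _ (Finset.mem_erase.2 ⟨hc, Finset.mem_univ c⟩)

noncomputable def dualChannel (E : K → Matrix (Fin N) (Fin N) ℂ) (A : Matrix (Fin N) (Fin N) ℂ) :
    Matrix (Fin N) (Fin N) ℂ :=
  ∑ k, (E k)ᴴ * A * E k

theorem trace_mul_channel (E : K → Matrix (Fin N) (Fin N) ℂ) (A τ : Matrix (Fin N) (Fin N) ℂ) :
    (A * channel E τ).trace = (dualChannel E A * τ).trace := by
  simp only [channel, dualChannel, Finset.mul_sum, Finset.sum_mul, trace_sum]
  refine Finset.sum_congr rfl fun k _ => ?_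
  rw [← mul_assoc, ← mul_assoc, trace_mul_comm, ← mul_assoc, ← mul_assoc]

theorem IsPOVM.dualChannel {M : C → Matrix (Fin N) (Fin N) ℂ} (hM : IsPOVM M)
    {E : K → Matrix (Fin N) (Fin N) ℂ} (hE : IsKrausFamily E) :
    IsPOVM fun c => dualChannel E (M c) := by
  refine ⟨fun c => ?_, ?_⟩
  · exact Finset.sum_induction _ Matrix.PosSemidef (fun _ _ => .add) .zero
      fun k _ => (hM.1 c).conjTranspose_mul_mul_same (E k)
  · simp only [_root_.dualChannel]
    rw [Finset.sum_comm, ← hE]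
    refine Finset.sum_congr rfl fun k _ => ?_
    rw [← Finset.sum_mul, ← Finset.mul_sum, hM.2, mul_one]

end Channel

/-- **Robustness lower bound from the measurement distribution.**
If the fidelity distance from ρ to σ is at most
`min_{c ≠ c*} (1/2)(√p_{c*} − √p_c)²`, then the classifier's prediction does not change:
the outcome probability of c* on E(σ) dominates that of every other class. -/
theorem robustness_lower_bound_channel
    {N : ℕ} {C K : Type*} [Fintype C] [DecidableEq C] [Fintype K]
    (hC : 1 < Fintype.card C)
    (M : C → Matrix (Fin N) (Fin N) ℂ) (hM : IsPOVM M)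
    (E : K → Matrix (Fin N) (Fin N) ℂ) (hE : IsKrausFamily E)
    (ρ : Matrix (Fin N) (Fin N) ℂ) (hρ : IsDensityMatrix ρ)
    (p : C → ℝ) (hp : ∀ c, (p c : ℂ) = (M c * channel E ρ).trace)
    (cstar : C) (hcstar : ∀ c, p c ≤ p cstar)
    (σ : Matrix (Fin N) (Fin N) ℂ) (hσ : IsDensityMatrix σ)
    (hclose : 1 - fidelity ρ σ ≤
      minErase cstar hC fun c => (1 / 2) * (Real.sqrt (p cstar) - Real.sqrt (p c)) ^ 2) :
    ∀ c, c ≠ cstar →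
      (M c * channel E σ).trace ≤ (M cstar * channel E σ).trace := by
  intro c hc
  set W := fun c => dualChannel E (M c)
  have hW : IsPOVM W := hM.dualChannel hE
  obtain rfl : p = fun c => (W c * ρ).trace.re := funext fun c => by
    rw [← Complex.ofReal_inj, hp, trace_mul_channel, ← (hW.1 c).trace_mul_eq_ofReal_re hρ.1]
  simp only [trace_mul_channel]
  rw [(hW.1 c).trace_mul_eq_ofReal_re hσ.1, (hW.1 cstar).trace_mul_eq_ofReal_re hσ.1,
    Complex.real_le_real]
  by_contra! hflip
  have hfid : fidelity ρ σ ≤ (∑ i, √((W i * ρ).trace.re) * √((W i * σ).trace.re)) ^ 2 :=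
    pow_le_pow_left₀ (rootFidelity_nonneg hρ.1 hσ.1)
      (rootFidelity_le_sum_sqrt_mul_sqrt hρ.1 hσ.1 hW) 2
  have hgap := sq_sum_sqrt_mul_sqrt_lt (hW.re_trace_mul_nonneg hρ.1)
    (hW.re_trace_mul_nonneg hσ.1) (hW.sum_re_trace_mul hρ) (hW.sum_re_trace_mul hσ) hc
    (hcstar c) hflip
  have hclose' := hclose.trans (minErase_le hC _ hc)
  linarith
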